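/- Fix k ∈ ℂ. For t ∈ ℂ∖{0}, let M(t) be the 3×3 complex matrix with rows (t, 0, 0), (k(t-1), 1, 0), (k²(t-1)²/t, 2k(t-1)/t, 1/t). Then: (1) M(t) ∈ SL(3,ℂ) for every t ≠ 0, and M(t₁)·M(t₂) = M(t₁·t₂) for all t₁, t₂ ≠ 0, so that {M(t) : t ∈ ℂ∖{0}} is a subgroup of SL(3,ℂ); (2) every M(t) maps the set C = {(x:y:z) ∈ ℙ²(ℂ) : x²·z = x·y²} onto itself; and (3) every M(t) fixes each of the three points (0:0:1), (0:1:2k), and (1:k:k²) of ℙ²(ℂ). -/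

import Mathlib

open Matrix

noncomputable section

/-- The special linear group `SL(3, ℂ)`. -/
abbrev SL3 := Matrix.SpecialLinearGroup (Fin 3) ℂ

/-- The complex projective plane `ℙ²(ℂ)`. -/
abbrev P2 := Projectivization ℂ (Fin 3 → ℂ)

/-- The action of `SL(3, ℂ)` on `ℙ²(ℂ)` induced by the linear action on `ℂ³`. -/
noncomputable def act (g : SL3) (p : P2) : P2 :=
  Projectivization.map (Matrix.SpecialLinearGroup.toLin' g).toLinearMap
    (Matrix.SpecialLinearGroup.toLin' g).injective p
/-- The matrix `M(t)` with rows `(t,0,0)`, `(k(t-1),1,0)`,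
`(k²(t-1)²/t, 2k(t-1)/t, 1/t)`. -/
def Mfam (k t : ℂ) : Matrix (Fin 3) (Fin 3) ℂ :=
  !![t, 0, 0;
     k * (t - 1), 1, 0;
     k ^ 2 * (t - 1) ^ 2 / t, 2 * k * (t - 1) / t, 1 / t]

/-- The union of a smooth conic and a tangent line, `{x²·z = x·y²}`. -/
def Ctan : Set P2 := {p : P2 | p.rep 0 ^ 2 * p.rep 2 = p.rep 0 * p.rep 1 ^ 2}

/-- The tacnodal point `(0:0:1)`. -/
def q₁ : P2 := Projectivization.mk ℂ ![0, 0, 1] (by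
  intro h; simpa using congrFun h 2)

/-- The point `(0:1:2k)`. -/
def q₂ (k : ℂ) : P2 := Projectivization.mk ℂ ![0, 1, 2 * k] (by
  intro h; simpa using congrFun h 1)

/-- The point `(1:k:k²)`. -/
def q₃ (k : ℂ) : P2 := Projectivization.mk ℂ ![1, k, k ^ 2] (by
  intro h; simpa using congrFun h 0)

/-!
`M(t)` multiplies the cubic form `x²z - xy²` cutting out `Ctan` by `t`, so it maps `Ctan` into
itself; since `M(t)⁻¹ = M(t⁻¹)` is of the same kind, the image is all of `Ctan`. The chosen
representatives of `(0:0:1)`, `(0:1:2k)` and `(1:k:k²)` are eigenvectors of `M(t)` with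
eigenvalues `t⁻¹`, `1` and `t`.
-/

open Projectivization Pointwise

lemma act_eq_smul (g : SL3) : act g = (g • ·) := rfl

lemma smul_mk_eq_self_of_mulVec_eq_smul {ι F : Type*} [Fintype ι] [DecidableEq ι] [Field F]
    (g : SpecialLinearGroup ι F) {v : ι → F} (hv : v ≠ 0) {c : F}
    (h : (g : Matrix ι ι F) *ᵥ v = c • v) : g • mk F v hv = mk F v hv := by
  rw [smul_mk, mk_eq_mk_iff']
  exact ⟨c, h.symm⟩

lemma Mfam_det (k : ℂ) {t : ℂ} (ht : t ≠ 0) : (Mfam k t).det = 1 := by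
  simp only [Mfam, det_fin_three, of_apply, cons_val', cons_val_zero, cons_val_one,
    cons_val_two, empty_val', cons_val_fin_one, head_cons, tail_cons, head_fin_const]
  field_simp
  ring

lemma Mfam_mul (k : ℂ) {t₁ t₂ : ℂ} (h₁ : t₁ ≠ 0) (h₂ : t₂ ≠ 0) :
    Mfam k t₁ * Mfam k t₂ = Mfam k (t₁ * t₂) := by
  ext i j
  fin_cases i <;> fin_cases j <;> simp [Mfam, mul_apply, Fin.sum_univ_three] <;> field_simp <;> ring

lemma Mfam_one (k : ℂ) : Mfam k 1 = 1 := by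
  ext i j
  fin_cases i <;> fin_cases j <;> simp [Mfam]

lemma coe_inv_eq_Mfam_inv {k t : ℂ} (ht : t ≠ 0) {g : SL3}
    (hg : (g : Matrix (Fin 3) (Fin 3) ℂ) = Mfam k t) :
    ((g⁻¹ : SL3) : Matrix (Fin 3) (Fin 3) ℂ) = Mfam k t⁻¹ := by
  have hinv : g⁻¹ = (⟨Mfam k t⁻¹, Mfam_det k (inv_ne_zero ht)⟩ : SL3) := by
    refine inv_eq_of_mul_eq_one_right (Subtype.ext ?_)
    change (g : Matrix (Fin 3) (Fin 3) ℂ) * Mfam k t⁻¹ = 1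
    rw [hg, Mfam_mul k ht (inv_ne_zero ht), mul_inv_cancel₀ ht, Mfam_one]
  rw [hinv]

lemma Mfam_mulVec_q₁ (k t : ℂ) : Mfam k t *ᵥ ![0, 0, 1] = t⁻¹ • ![0, 0, 1] := by
  ext i
  fin_cases i <;> simp [Mfam, mulVec, dotProduct, Fin.sum_univ_three]

lemma Mfam_mulVec_q₂ (k : ℂ) {t : ℂ} (ht : t ≠ 0) :
    Mfam k t *ᵥ ![0, 1, 2 * k] = ![0, 1, 2 * k] := by
  ext i
  fin_cases i <;> simp [Mfam, mulVec, dotProduct, Fin.sum_univ_three]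
  field_simp
  ring

lemma Mfam_mulVec_q₃ (k : ℂ) {t : ℂ} (ht : t ≠ 0) :
    Mfam k t *ᵥ ![1, k, k ^ 2] = t • ![1, k, k ^ 2] := by
  ext i
  fin_cases i <;> simp [Mfam, mulVec, dotProduct, Fin.sum_univ_three] <;> field_simp <;> ring

def ctanForm (v : Fin 3 → ℂ) : ℂ := v 0 ^ 2 * v 2 - v 0 * v 1 ^ 2

lemma ctanForm_smul (a : ℂ) (v : Fin 3 → ℂ) : ctanForm (a • v) = a ^ 3 * ctanForm v := by
  simp only [ctanForm, Pi.smul_apply, smul_eq_mul]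
  ring

lemma ctanForm_Mfam_mulVec (k : ℂ) {t : ℂ} (ht : t ≠ 0) (v : Fin 3 → ℂ) :
    ctanForm (Mfam k t *ᵥ v) = t * ctanForm v := by
  simp only [ctanForm, Mfam, mulVec, dotProduct, Fin.sum_univ_three, of_apply, cons_val',
    cons_val_fin_one, cons_val_zero, cons_val_one, cons_val, zero_mul, one_mul, add_zero]
  field_simp
  ring

lemma mk_mem_Ctan_iff {v : Fin 3 → ℂ} (hv : v ≠ 0) : mk ℂ v hv ∈ Ctan ↔ ctanForm v = 0 := by
  obtain ⟨a, ha⟩ := exists_smul_eq_mk_rep ℂ v hv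
  rw [Ctan, Set.mem_ofPred_eq, ← sub_eq_zero, ← ha]
  change ctanForm ((a : ℂ) • v) = 0 ↔ _
  simp [ctanForm_smul, a.ne_zero]

lemma smul_Ctan_subset {k t : ℂ} (ht : t ≠ 0) {g : SL3}
    (hg : (g : Matrix (Fin 3) (Fin 3) ℂ) = Mfam k t) : g • Ctan ⊆ Ctan := by
  refine Set.smul_set_subset_iff.2 fun p hp => ?_
  induction p using Projectivization.ind with
  | h v hv =>
    rw [mk_mem_Ctan_iff] at hp
    rw [smul_mk, mk_mem_Ctan_iff]
    change ctanForm ((g : Matrix (Fin 3) (Fin 3) ℂ) *ᵥ v) = 0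
    rw [hg, ctanForm_Mfam_mulVec k ht, hp, mul_zero]

/-- The one-parameter family `M(t)` from the proof of Lemma 2.13: each `M(t)` lies in
`SL(3,ℂ)`, the family is a subgroup (`M(t₁)·M(t₂) = M(t₁t₂)`), each `M(t)` maps the
conic-plus-tangent-line cubic `{x²·z = x·y²}` onto itself, and each `M(t)` fixes the
points `(0:0:1)`, `(0:1:2k)` and `(1:k:k²)`. -/
theorem one_parameter_family_conic_tangent (k : ℂ) :
    (∀ t : ℂ, t ≠ 0 → ∃ g : SL3, (g : Matrix (Fin 3) (Fin 3) ℂ) = Mfam k t) ∧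
    (∀ t₁ t₂ : ℂ, t₁ ≠ 0 → t₂ ≠ 0 → Mfam k t₁ * Mfam k t₂ = Mfam k (t₁ * t₂)) ∧
    (∀ t : ℂ, t ≠ 0 → ∀ g : SL3, (g : Matrix (Fin 3) (Fin 3) ℂ) = Mfam k t →
      act g '' Ctan = Ctan ∧
      act g q₁ = q₁ ∧ act g (q₂ k) = q₂ k ∧ act g (q₃ k) = q₃ k) := by
  refine ⟨fun t ht => ⟨⟨Mfam k t, Mfam_det k ht⟩, rfl⟩, fun _ _ => Mfam_mul k,
    fun t ht g hg => ⟨?_, ?_, ?_, ?_⟩⟩ <;> rw [act_eq_smul]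
  · rw [Set.image_smul]
    exact (smul_Ctan_subset ht hg).antisymm <| Set.subset_smul_set_iff.2 <|
      smul_Ctan_subset (inv_ne_zero ht) (coe_inv_eq_Mfam_inv ht hg)
  · exact smul_mk_eq_self_of_mulVec_eq_smul g _ (hg ▸ Mfam_mulVec_q₁ k t)
  · exact smul_mk_eq_self_of_mulVec_eq_smul g _ (c := 1)
      (by rw [hg, Mfam_mulVec_q₂ k ht, one_smul])
  · exact smul_mk_eq_self_of_mulVec_eq_smul g _ (hg ▸ Mfam_mulVec_q₃ k ht)
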